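/- arXiv:1407.1868 — 5 statements merged into one kernel-verified Lean document; each statement's English description precedes it below -/
import Mathlib

section
/- Let E be a 2-dimensional real Hilbert space and let φ : E → E be a (not necessarily linear or bijective) map such that Area(φ(a), φ(b)) = Area(a, b) for all a, b ∈ E. Then there exist a function ε : E → {−1, 1} and a linear operator A : E → E with |det A| = 1 such that φ(a) = ε(a) · (A a) for every a ∈ E. -/
noncomputable def parArea {E : Type*} [NormedAddCommGroup E] [InnerProductSpace ℝ E]
    (a b : E) : ℝ :=
  Real.sqrt (‖a‖ ^ 2 * ‖b‖ ^ 2 - (inner ℝ a b : ℝ) ^ 2)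

/-!
Fix an orientation of `E`, with area form `ω`; then `parArea a b = |ω a b|`. Choose `u, v` with
`ω u v = 1`. In dimension two every `x` has coordinates `p x = ω x v` and `q x = ω u x` with respect
to `u, v`, and `P = ω (φ ·) (φ v)`, `Q = ω (φ u) (φ ·)` are (up to the factor `ω (φ u) (φ v) = ±1`)
the coordinates of `φ x` with respect to `φ u, φ v`. Preservation of `|ω|` against `u` and `v` gives
`|P| = |p|` and `|Q| = |q|`, and preservation of `|ω|` on all pairs forces `P x Q x = c p x q x` for
one sign `c`. Hence `φ x = ± A x`, where `A` is the linear map with `A u = ± φ u`, `A v = ± c φ v`.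
-/

theorem exists_sign_of_sq_eq_of_mul_eq {P Q p q c : ℝ} (hP : P ^ 2 = p ^ 2) (hQ : Q ^ 2 = q ^ 2)
    (hPQ : P * Q = c * (p * q)) (hc : c ^ 2 = 1) :
    ∃ s : ℝ, (s = 1 ∨ s = -1) ∧ P = s * p ∧ Q = s * (c * q) := by
  by_cases hp : p = 0
  · have hP0 : P = 0 := by simpa [hp] using hP
    rcases sq_eq_sq_iff_eq_or_eq_neg.mp hQ with h | h
    · exact ⟨c, sq_eq_one_iff.mp hc, by simp [hP0, hp], by linear_combination h - q * hc⟩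
    · refine ⟨-c, ?_, by simp [hP0, hp], by linear_combination h + q * hc⟩
      rcases sq_eq_one_iff.mp hc with rfl | rfl <;> norm_num
  · rcases sq_eq_sq_iff_eq_or_eq_neg.mp hP with h | h
    · refine ⟨1, Or.inl rfl, by rw [h, one_mul], mul_left_cancel₀ hp ?_⟩
      linear_combination hPQ - Q * h
    · refine ⟨-1, Or.inr rfl, by rw [h]; ring, mul_left_cancel₀ hp ?_⟩
      linear_combination -hPQ + Q * h

theorem exists_forall_mul_eq_of_abs_cross_eq {X : Type*} {p q P Q : X → ℝ}
    (hP : ∀ x, |P x| = |p x|) (hQ : ∀ x, |Q x| = |q x|)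
    (hPQ : ∀ x y, |P x * Q y - P y * Q x| = |p x * q y - p y * q x|) :
    ∃ c : ℝ, c ^ 2 = 1 ∧ ∀ x, P x * Q x = c * (p x * q x) := by
  by_cases h : ∃ w, p w * q w ≠ 0
  · obtain ⟨w, hw⟩ := h
    have hP2 x : P x ^ 2 = p x ^ 2 := (sq_eq_sq_iff_abs_eq_abs _ _).mpr (hP x)
    have hQ2 x : Q x ^ 2 = q x ^ 2 := (sq_eq_sq_iff_abs_eq_abs _ _).mpr (hQ x)
    -- the cross terms of the squared identity `hPQ x w` agree, all other terms being squares
    have hcross x : P x * Q x * (P w * Q w) = p x * q x * (p w * q w) := by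
      have h2 := (sq_eq_sq_iff_abs_eq_abs _ _).mpr (hPQ x w)
      linear_combination (-1 / 2) * h2 + (Q w ^ 2 / 2) * hP2 x + (p x ^ 2 / 2) * hQ2 w
        + (P w ^ 2 / 2) * hQ2 x + (q x ^ 2 / 2) * hP2 w
    have hW : P w * Q w ≠ 0 := by
      rwa [← abs_ne_zero, abs_mul, hP, hQ, ← abs_mul, abs_ne_zero]
    refine ⟨p w * q w / (P w * Q w), ?_, fun x => ?_⟩
    · rw [div_pow, div_eq_one_iff_eq (pow_ne_zero 2 hW)]
      linear_combination -hcross w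
    · rw [div_mul_eq_mul_div, eq_div_iff hW]
      linear_combination hcross x
  · push Not at h
    refine ⟨1, one_pow 2, fun x => ?_⟩
    have : |P x * Q x| = 0 := by rw [abs_mul, hP, hQ, ← abs_mul, h x, abs_zero]
    simpa [h x] using this

namespace LinearMap.IsAlt

variable {R M : Type*} [CommRing R] [AddCommGroup M] [Module R M] {ω : M →ₗ[R] M →ₗ[R] R}

theorem apply_eq_fin_two (hω : ω.IsAlt) (b : Module.Basis (Fin 2) R M) (x y : M) :
    ω x y = (b.repr x 0 * b.repr y 1 - b.repr x 1 * b.repr y 0) * ω (b 0) (b 1) := by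
  have hsum z : b.repr z 0 • b 0 + b.repr z 1 • b 1 = z := by
    rw [← Fin.sum_univ_two (fun i => b.repr z i • b i), b.sum_repr]
  conv_lhs => rw [← hsum x, ← hsum y]
  simp only [map_add, map_smul, add_apply, smul_apply, smul_eq_mul, hω.self_eq_zero,
    ← hω.neg (b 0) (b 1)]
  ring

theorem smul_eq_fin_two (hω : ω.IsAlt) (b : Module.Basis (Fin 2) R M) (u v x : M) :
    ω u v • x = ω x v • u + ω u x • v := by
  rw [hω.apply_eq_fin_two b u v, hω.apply_eq_fin_two b x v, hω.apply_eq_fin_two b u x]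
  refine b.ext_elem (Fin.forall_fin_two.mpr ⟨?_, ?_⟩) <;>
  · simp only [map_add, map_smul, Finsupp.add_apply, Finsupp.smul_apply, smul_eq_mul]
    ring

theorem mul_apply_eq_fin_two (hω : ω.IsAlt) (b : Module.Basis (Fin 2) R M) (u v x y : M) :
    ω u v * ω x y = ω x v * ω u y - ω y v * ω u x := by
  have h := congrArg (fun z => ω z y) (hω.smul_eq_fin_two b u v x)
  simp only [map_add, map_smul, add_apply, smul_apply, smul_eq_mul, ← hω.neg y v] at h
  linear_combination h

end LinearMap.IsAlt

namespace Orientation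

attribute [local instance] FiniteDimensional.of_fact_finrank_eq_two

variable {E : Type*} [NormedAddCommGroup E] [InnerProductSpace ℝ E]
  [Fact (Module.finrank ℝ E = 2)] (o : Orientation ℝ E (Fin 2))

local notation "ω" => o.areaForm

theorem parArea_eq_abs_areaForm (a b : E) : parArea a b = |ω a b| := by
  rw [parArea, ← o.inner_sq_add_areaForm_sq a b, add_sub_cancel_left, Real.sqrt_sq_eq_abs]

theorem areaForm_comp_linearMap (A : E →ₗ[ℝ] E) (x y : E) :
    ω (A x) (A y) = LinearMap.det A * ω x y := by
  have hcomp : ![A x, A y] = A ∘ ![x, y] := by ext i; fin_cases i <;> rfl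
  rw [o.areaForm_to_volumeForm, o.areaForm_to_volumeForm, hcomp,
    o.volumeForm.eq_smul_basis_det (Module.finBasisOfFinrankEq ℝ E Fact.out)]
  simp only [AlternatingMap.smul_apply, Module.Basis.det_comp, smul_eq_mul]
  ring

theorem exists_areaForm_eq_one : ∃ u v : E, ω u v = 1 := by
  have : Nontrivial E := Module.nontrivial_of_finrank_eq_succ (Fact.out : Module.finrank ℝ E = 2)
  obtain ⟨u, hu⟩ := exists_norm_eq E zero_le_one
  refine ⟨u, o.rightAngleRotation u, ?_⟩
  rw [o.areaForm_rightAngleRotation_right, real_inner_self_eq_norm_sq, hu, one_pow]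

theorem exists_sign_smul_of_abs_areaForm_eq {φ : E → E}
    (hφ : ∀ a b, |ω (φ a) (φ b)| = |ω a b|) :
    ∃ (ε : E → ℝ) (A : E →ₗ[ℝ] E),
      (∀ a, ε a = 1 ∨ ε a = -1) ∧ |LinearMap.det A| = 1 ∧ ∀ a, φ a = ε a • A a := by
  have hω : (ω).IsAlt := o.areaForm_apply_self
  let b : Module.Basis (Fin 2) ℝ E := Module.finBasisOfFinrankEq ℝ E Fact.out
  obtain ⟨u, v, huv⟩ := o.exists_areaForm_eq_one
  set d := ω (φ u) (φ v)
  have hd : d ^ 2 = 1 := by rw [← sq_abs, hφ, huv, abs_one, one_pow]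
  obtain ⟨c, hc, hPQ⟩ := exists_forall_mul_eq_of_abs_cross_eq
    (p := fun x => ω x v) (q := fun x => ω u x)
    (P := fun x => ω (φ x) (φ v)) (Q := fun x => ω (φ u) (φ x))
    (fun x => hφ x v) (fun x => hφ u x) fun x y => by
      rw [← hω.mul_apply_eq_fin_two b, ← hω.mul_apply_eq_fin_two b]
      simp only [abs_mul, hφ]
  let A : E →ₗ[ℝ] E := d • ((ω).flip v).smulRight (φ u) + (d * c) • (ω u).smulRight (φ v)
  have hA x : A x = d • (ω x v • φ u + (c * ω u x) • φ v) := by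
    simp [A, smul_add, smul_smul, mul_comm, mul_left_comm]
  have hsign x : ∃ s : ℝ, (s = 1 ∨ s = -1) ∧ φ x = s • A x := by
    obtain ⟨s, hs, hP, hQ⟩ := exists_sign_of_sq_eq_of_mul_eq
      ((sq_eq_sq_iff_abs_eq_abs _ _).mpr (hφ x v)) ((sq_eq_sq_iff_abs_eq_abs _ _).mpr (hφ u x))
      (hPQ x) hc
    refine ⟨s, hs, ?_⟩
    have hcramer := hω.smul_eq_fin_two b (φ u) (φ v) (φ x)
    calc φ x = d • d • φ x := by rw [smul_smul, ← sq, hd, one_smul]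
      _ = s • A x := by rw [hcramer, hA, hP, hQ]; module
  choose ε hε hφε using hsign
  refine ⟨ε, A, hε, ?_, hφε⟩
  have hdet := o.areaForm_comp_linearMap A u v
  rw [hA, hA, huv, hω.self_eq_zero, hω.self_eq_zero] at hdet
  simp only [one_smul, zero_smul, mul_zero, mul_one, add_zero, zero_add, map_smul,
    LinearMap.smul_apply, smul_eq_mul] at hdet
  rw [← abs_one, ← sq_eq_sq_iff_abs_eq_abs, ← hdet]
  linear_combination d ^ 6 * hc + (d ^ 4 + d ^ 2 + 1) * hd

end Orientation

theorem stmt0_general {E : Type*} [NormedAddCommGroup E] [InnerProductSpace ℝ E]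
    (hdim : Module.finrank ℝ E = 2)
    (φ : E → E)
    (hφ : ∀ a b : E, parArea (φ a) (φ b) = parArea a b) :
    ∃ (ε : E → ℝ) (A : E →ₗ[ℝ] E),
      (∀ a, ε a = 1 ∨ ε a = -1) ∧ |LinearMap.det A| = 1 ∧
      ∀ a, φ a = ε a • A a := by
  have : Fact (Module.finrank ℝ E = 2) := ⟨hdim⟩
  have : FiniteDimensional ℝ E := .of_fact_finrank_eq_two
  let o : Orientation ℝ E (Fin 2) := (Module.finBasisOfFinrankEq ℝ E hdim).orientation
  refine o.exists_sign_smul_of_abs_areaForm_eq fun a b => ?_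
  rw [← o.parArea_eq_abs_areaForm, ← o.parArea_eq_abs_areaForm, hφ]

/-- any map of a 2-dimensional real Hilbert space into itself preserving
the area of parallelograms is, up to signs, a linear operator with `|det| = 1`. -/
theorem stmt0 {E : Type*} [NormedAddCommGroup E] [InnerProductSpace ℝ E] [CompleteSpace E]
    (hdim : Module.finrank ℝ E = 2)
    (φ : E → E)
    (hφ : ∀ a b : E, parArea (φ a) (φ b) = parArea a b) :
    ∃ (ε : E → ℝ) (A : E →ₗ[ℝ] E),
      (∀ a, ε a = 1 ∨ ε a = -1) ∧ |LinearMap.det A| = 1 ∧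
      ∀ a, φ a = ε a • A a :=
  stmt0_general hdim φ hφ
end

section
/- Let E be an infinite-dimensional real Hilbert space (not necessarily separable) and let φ : E → E be a bijection such that Area(φ(a), φ(b)) = Area(a, b) for all a, b ∈ E. Then there exist a function ε : E → {−1, 1} and a linear, surjective isometry R : E → E such that φ(a) = ε(a) · (R a) for every a ∈ E. -/
/-!
For fixed `d`, the squared area `areaSq · d` satisfies the parallelogram law. Transporting this
through the surjection `φ` and testing it against a vector orthogonal to finitely many given ones
(there is one, as `E` is infinite-dimensional) shows that `‖φ ·‖²` satisfies the parallelogram law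
and that `φ (a + b) ∈ span {φ a, φ b}`; comparing areas then gives `φ (a + b) = ±φ a ± φ b`
whenever `a, b` are independent. Evaluating the polarization of `‖φ ·‖²` on three mutually
orthogonal vectors forces `‖φ v‖ = ‖v‖`, hence `⟪φ a, φ b⟫ = ±⟪a, b⟫`. Expanding
`‖φ (a + b + c)‖² = ‖a + b + c‖²` shows that `φ` preserves the triple products
`⟪a, b⟫ ⟪b, c⟫ ⟪a, c⟫`, so the signs `⟪φ a, φ b⟫ / ⟪a, b⟫` form a cocycle. It is a coboundary
`ε a * ε b` because finitely many nonzero vectors always have a common non-orthogonal vector.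
Then `a ↦ ε a • φ a` preserves inner products, so it is a linear isometry, onto because `φ` is.
-/

/-- Applied with `tᵢ = ‖φ eᵢ‖²`, `nᵢ = ‖eᵢ‖²` and `Pᵢⱼ` the polarization of `‖φ ·‖²` at `(eᵢ, eⱼ)`,
for three mutually orthogonal nonzero vectors `eᵢ`. -/
theorem eq_of_gram_relations {t₁ t₂ t₃ n₁ n₂ n₃ P₁₂ P₁₃ P₂₃ : ℝ} (ht₁ : 0 ≤ t₁) (hn₁ : 0 < n₁)
    (hn₂ : 0 < n₂) (hn₃ : 0 < n₃)
    (h₁₂ : P₁₂ ^ 2 = 4 * (t₁ * t₂ - n₁ * n₂)) (h₁₃ : P₁₃ ^ 2 = 4 * (t₁ * t₃ - n₁ * n₃))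
    (h₂₃ : P₂₃ ^ 2 = 4 * (t₂ * t₃ - n₂ * n₃))
    (k₁ : P₁₂ * P₁₃ = 2 * t₁ * P₂₃) (k₂ : P₁₂ * P₂₃ = 2 * t₂ * P₁₃)
    (k₃ : P₁₃ * P₂₃ = 2 * t₃ * P₁₂) : t₁ = n₁ := by
  have hP₁₃₂₃ : P₁₃ * P₂₃ = 0 := (mul_eq_zero.1 (by
    linear_combination (-(P₁₂ * P₂₃) / 4) * k₁ - (t₁ * P₂₃ / 2) * k₂ + (P₁₃ * P₂₃ / 4) * h₁₂ :
      n₁ * n₂ * (P₁₃ * P₂₃) = 0)).resolve_left (mul_pos hn₁ hn₂).ne'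
  have hP₁₂₂₃ : P₁₂ * P₂₃ = 0 := (mul_eq_zero.1 (by
    linear_combination (-(P₁₃ * P₂₃) / 4) * k₁ - (t₁ * P₂₃ / 2) * k₃ + (P₁₂ * P₂₃ / 4) * h₁₃ :
      n₁ * n₃ * (P₁₂ * P₂₃) = 0)).resolve_left (mul_pos hn₁ hn₃).ne'
  have hP₁₂₁₃ : P₁₂ * P₁₃ = 0 := (mul_eq_zero.1 (by
    linear_combination (-(P₁₃ * P₂₃) / 4) * k₂ - (t₂ * P₁₃ / 2) * k₃ + (P₁₂ * P₁₃ / 4) * h₂₃ :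
      n₂ * n₃ * (P₁₂ * P₁₃) = 0)).resolve_left (mul_pos hn₂ hn₃).ne'
  have ht₁₂ : t₁ * t₂ ≠ 0 := by nlinarith [sq_nonneg P₁₂, mul_pos hn₁ hn₂]
  have ht₁₃ : t₁ * t₃ ≠ 0 := by nlinarith [sq_nonneg P₁₃, mul_pos hn₁ hn₃]
  have hP₂₃ : P₂₃ = 0 := by
    simpa [left_ne_zero_of_mul ht₁₂] using k₁.symm.trans hP₁₂₁₃
  have hP₁₃ : P₁₃ = 0 := by
    simpa [right_ne_zero_of_mul ht₁₂] using k₂.symm.trans hP₁₂₂₃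
  have hP₁₂ : P₁₂ = 0 := by
    simpa [right_ne_zero_of_mul ht₁₃] using k₃.symm.trans hP₁₃₂₃
  subst hP₁₂ hP₁₃ hP₂₃
  have key : (t₁ - n₁) * ((t₁ + n₁) * (n₂ * n₃)) = 0 := by
    linear_combination (t₁ ^ 2 / 4) * h₂₃ - (t₁ * t₃ / 4) * h₁₂ - (n₁ * n₂ / 4) * h₁₃
  exact sub_eq_zero.1 ((mul_eq_zero.1 key).resolve_right
    (mul_pos (add_pos_of_nonneg_of_pos ht₁ hn₁) (mul_pos hn₂ hn₃)).ne')

/-- If an odd number of the signs `α β P / p`, `β γ Q / q`, `α γ R / r` were `-1`, then one of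
`p`, `q`, `r`, `p + q + r` would vanish. -/
theorem mul_mul_eq_of_signed_sum_eq {P Q R p q r α β γ : ℝ} (hP : P ^ 2 = p ^ 2)
    (hQ : Q ^ 2 = q ^ 2) (hR : R ^ 2 = r ^ 2) (hα : α ^ 2 = 1) (hβ : β ^ 2 = 1) (hγ : γ ^ 2 = 1)
    (hp : p ≠ 0) (hq : q ≠ 0) (hr : r ≠ 0) (hpqr : p + q + r ≠ 0)
    (h : α * β * P + β * γ * Q + α * γ * R = p + q + r) : P * Q * R = p * q * r := by
  rw [sq_eq_sq_iff_eq_or_eq_neg] at hP hQ hR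
  rw [sq_eq_one_iff] at hα hβ hγ
  rcases hP with rfl | rfl <;> rcases hQ with rfl | rfl <;> rcases hR with rfl | rfl <;>
    rcases hα with rfl | rfl <;> rcases hβ with rfl | rfl <;> rcases hγ with rfl | rfl <;>
    first
    | ring1
    | exact absurd (by linarith) hp
    | exact absurd (by linarith) hq
    | exact absurd (by linarith) hr
    | exact absurd (by linarith) hpqr

section

open RealInnerProductSpace

variable {E : Type*} [NormedAddCommGroup E] [InnerProductSpace ℝ E]

noncomputable def areaSq (a b : E) : ℝ := ‖a‖ ^ 2 * ‖b‖ ^ 2 - ⟪a, b⟫ ^ 2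

theorem areaSq_nonneg (a b : E) : 0 ≤ areaSq a b := by
  have h := abs_real_inner_le_norm a b
  rw [areaSq, sub_nonneg, ← mul_pow, ← sq_abs]
  gcongr

theorem areaSq_comm (a b : E) : areaSq a b = areaSq b a := by
  rw [areaSq, areaSq, real_inner_comm]; ring

theorem areaSq_smul_left (t : ℝ) (a b : E) : areaSq (t • a) b = t ^ 2 * areaSq a b := by
  rw [areaSq, areaSq, norm_smul, real_inner_smul_left, Real.norm_eq_abs]
  ring_nf; rw [sq_abs]; ring

theorem areaSq_smul_right (t : ℝ) (a b : E) : areaSq a (t • b) = t ^ 2 * areaSq a b := by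
  rw [areaSq_comm, areaSq_smul_left, areaSq_comm]

theorem areaSq_add_smul_left (a b : E) (t : ℝ) : areaSq (a + t • b) b = areaSq a b := by
  rw [areaSq, areaSq, norm_add_sq_real, inner_add_left, real_inner_smul_left,
    real_inner_smul_right, norm_smul, real_inner_self_eq_norm_sq, Real.norm_eq_abs, mul_pow, sq_abs]
  ring

theorem areaSq_add_left (a b : E) : areaSq (a + b) b = areaSq a b := by
  simpa using areaSq_add_smul_left a b 1

theorem areaSq_smul_add_left (a b : E) (t : ℝ) : areaSq (t • a + b) a = areaSq b a := by
  rw [add_comm, areaSq_add_smul_left]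

theorem areaSq_add_right (a b : E) : areaSq (a + b) a = areaSq b a := by
  rw [add_comm, areaSq_add_left]

theorem areaSq_self (a : E) : areaSq a a = 0 := by
  rw [areaSq, real_inner_self_eq_norm_sq]; ring

theorem areaSq_zero_left (a : E) : areaSq 0 a = 0 := by simp [areaSq]

theorem areaSq_of_inner_eq_zero {a b : E} (h : ⟪a, b⟫ = 0) : areaSq a b = ‖a‖ ^ 2 * ‖b‖ ^ 2 := by
  rw [areaSq, h]; ring

theorem areaSq_add_add_areaSq_sub (a b d : E) :
    areaSq (a + b) d + areaSq (a - b) d = 2 * areaSq a d + 2 * areaSq b d := by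
  rw [areaSq, areaSq, areaSq, areaSq, norm_add_sq_real, norm_sub_sq_real, inner_add_left,
    inner_sub_left]
  ring

theorem exists_eq_smul_of_areaSq_eq_zero {a b : E} (ha : a ≠ 0) (h : areaSq a b = 0) :
    ∃ t : ℝ, b = t • a := by
  rcases eq_or_ne b 0 with rfl | hb
  · exact ⟨0, (zero_smul ℝ a).symm⟩
  obtain ⟨t, -, ht⟩ := (norm_inner_eq_norm_iff (𝕜 := ℝ) ha hb).1 <| by
    rw [Real.norm_eq_abs, ← sq_eq_sq₀ (abs_nonneg _) (by positivity), sq_abs, mul_pow]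
    rw [areaSq, sub_eq_zero] at h
    exact h.symm
  exact ⟨t, ht⟩

theorem areaSq_ne_zero_of_inner_eq_zero {a b : E} (h : ⟪a, b⟫ = 0) (ha : a ≠ 0) (hb : b ≠ 0) :
    areaSq a b ≠ 0 := by
  rw [areaSq_of_inner_eq_zero h]; positivity

theorem areaSq_two_smul_add_ne_zero {a b c : E} (hab : areaSq a b ≠ 0) (hc : c ≠ 0)
    (habc : areaSq (a + b) c = 0) : areaSq ((2 : ℝ) • a + b) c ≠ 0 := by
  have hab0 : a + b ≠ 0 := fun h => hab <| by
    rw [eq_neg_of_add_eq_zero_right h, ← neg_one_smul ℝ a, areaSq_smul_right, areaSq_self,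
      mul_zero]
  obtain ⟨s, rfl⟩ := exists_eq_smul_of_areaSq_eq_zero hab0 habc
  have hs : s ≠ 0 := by rintro rfl; exact hc (zero_smul ℝ _)
  rw [areaSq_smul_right, two_smul, add_assoc, areaSq_add_left, areaSq_comm, add_comm,
    areaSq_add_left, areaSq_comm]
  exact mul_ne_zero (pow_ne_zero 2 hs) hab

theorem exists_ne_zero_forall_inner_eq_zero (hdim : ¬ FiniteDimensional ℝ E) {s : Set E}
    (hs : s.Finite) : ∃ e ≠ (0 : E), ∀ v ∈ s, ⟪v, e⟫ = 0 := by
  have := FiniteDimensional.span_of_finite ℝ hs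
  have hspan : Submodule.span ℝ s ≠ ⊤ := fun h => hdim <|
    Module.Finite.of_surjective (Submodule.span ℝ s).subtype fun x => ⟨⟨x, h ▸ trivial⟩, rfl⟩
  obtain ⟨e, he, he0⟩ := Submodule.ne_bot_iff _ |>.1 <|
    mt Submodule.orthogonal_eq_bot_iff.1 hspan
  exact ⟨e, he0, fun v hv => (Submodule.mem_orthogonal _ e).1 he v (Submodule.subset_span hv)⟩

theorem exists_forall_inner_ne_zero (s : Finset E) : ∃ d : E, ∀ v ∈ s, v ≠ 0 → ⟪v, d⟫ ≠ 0 := by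
  classical
  by_contra! h
  obtain ⟨⟨v, hv⟩, htop⟩ := Subspace.exists_eq_top_of_iUnion_eq_univ
    (p := fun v : s.filter (· ≠ 0) => (ℝ ∙ (v : E))ᗮ) <| Set.eq_univ_of_forall fun d => by
      obtain ⟨v, hv, hv0, hvd⟩ := h d
      exact Set.mem_iUnion.2 ⟨⟨v, Finset.mem_filter.2 ⟨hv, hv0⟩⟩,
        Submodule.mem_orthogonal_singleton_iff_inner_right.2 hvd⟩
  have hvv : v ∈ (ℝ ∙ v)ᗮ := htop ▸ Submodule.mem_top
  exact (Finset.mem_filter.1 hv).2 <|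
    inner_self_eq_zero.1 (Submodule.mem_orthogonal_singleton_iff_inner_right.1 hvv)

theorem exists_linearIsometry_of_inner_map_map {F : Type*} [NormedAddCommGroup F]
    [InnerProductSpace ℝ F] {ψ : E → F} (hψ : ∀ a b, ⟪ψ a, ψ b⟫ = ⟪a, b⟫) :
    ∃ L : E →ₗᵢ[ℝ] F, ⇑L = ψ := by
  have map_add (a b : E) : ψ (a + b) = ψ a + ψ b := by
    rw [← sub_eq_zero, ← inner_self_eq_zero (𝕜 := ℝ)]
    simp only [inner_sub_left, inner_sub_right, inner_add_left, inner_add_right, hψ]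
    ring
  have map_smul (t : ℝ) (a : E) : ψ (t • a) = t • ψ a := by
    rw [← sub_eq_zero, ← inner_self_eq_zero (𝕜 := ℝ)]
    simp only [inner_sub_left, inner_sub_right, real_inner_smul_left, real_inner_smul_right, hψ]
    ring
  refine ⟨⟨⟨⟨ψ, map_add⟩, map_smul⟩, fun a => ?_⟩, rfl⟩
  change ‖ψ a‖ = ‖a‖
  rw [norm_eq_sqrt_real_inner, norm_eq_sqrt_real_inner, hψ]

theorem exists_sign_of_cocycle [Nontrivial E] (ρ : E → E → ℝ)
    (hsq : ∀ x y, ⟪x, y⟫ ≠ 0 → ρ x y ^ 2 = 1)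
    (hcocycle : ∀ x y z, ⟪x, y⟫ ≠ 0 → ⟪y, z⟫ ≠ 0 → ⟪x, z⟫ ≠ 0 → ρ x y * ρ y z * ρ x z = 1) :
    ∃ ε : E → ℝ, (∀ a ≠ 0, ε a ^ 2 = 1) ∧ ∀ a b, ⟪a, b⟫ ≠ 0 → ε a * ε b * ρ a b = 1 := by
  classical
  obtain ⟨u, hu⟩ := exists_ne (0 : E)
  choose c hc using fun a : E => exists_forall_inner_ne_zero ({a, u} : Finset E)
  have hcu (a : E) : ⟪u, c a⟫ ≠ 0 := hc a u (by simp) hu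
  have hca (a : E) : c a ≠ 0 := by intro h; apply hcu a; rw [h, inner_zero_right]
  -- `ε a := ρ a (c a) * ρ u (c a)` can be computed with any `d` seen by `a`, `u` and `c a`.
  have transport {a d : E} (ha : a ≠ 0) (had : ⟪a, d⟫ ≠ 0) (hud : ⟪u, d⟫ ≠ 0)
      (hcd : ⟪c a, d⟫ ≠ 0) : ρ a (c a) * ρ u (c a) = ρ a d * ρ u d := by
    have hac := hc a a (by simp) ha
    linear_combination (-(ρ a (c a) * ρ u (c a)) * ρ a d ^ 2) * hsq u d hud
      - ρ a (c a) * ρ u (c a) * hsq a d had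
      + (ρ a d * ρ u d * (ρ u (c a) * ρ (c a) d * ρ u d)) * hcocycle a (c a) d hac hcd had
      + ρ a d * ρ u d * hcocycle u (c a) d (hcu a) hcd hud
      - (ρ a d * ρ u d) ^ 2 * (ρ a (c a) * ρ u (c a)) * hsq (c a) d hcd
  refine ⟨fun a => ρ a (c a) * ρ u (c a), fun a ha => ?_, fun a b hab => ?_⟩
  · linear_combination ρ a (c a) ^ 2 * hsq u (c a) (hcu a) + hsq a (c a) (hc a a (by simp) ha)
  have ha : a ≠ 0 := by rintro rfl; simp at hab
  have hb : b ≠ 0 := by rintro rfl; simp at hab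
  obtain ⟨d, hd⟩ := exists_forall_inner_ne_zero ({a, b, u, c a, c b} : Finset E)
  dsimp only
  rw [transport ha (hd a (by simp) ha) (hd u (by simp) hu) (hd (c a) (by simp) (hca a)),
    transport hb (hd b (by simp) hb) (hd u (by simp) hu) (hd (c b) (by simp) (hca b))]
  linear_combination ρ u d ^ 2 * hcocycle a b d hab (hd b (by simp) hb) (hd a (by simp) ha)
    + hsq u d (hd u (by simp) hu)

def innerTriple (a b c : E) : ℝ := ⟪a, b⟫ * ⟪b, c⟫ * ⟪a, c⟫

theorem innerTriple_smul_left (t : ℝ) (a b c : E) :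
    innerTriple (t • a) b c = t ^ 2 * innerTriple a b c := by
  simp only [innerTriple, real_inner_smul_left]; ring

theorem innerTriple_smul_middle (t : ℝ) (a b c : E) :
    innerTriple a (t • b) c = t ^ 2 * innerTriple a b c := by
  simp only [innerTriple, real_inner_smul_left, real_inner_smul_right]; ring

theorem innerTriple_smul_right (t : ℝ) (a b c : E) :
    innerTriple a b (t • c) = t ^ 2 * innerTriple a b c := by
  simp only [innerTriple, real_inner_smul_right]; ring

theorem innerTriple_self_left (a c : E) : innerTriple a a c = ‖a‖ ^ 2 * ⟪a, c⟫ ^ 2 := by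
  rw [innerTriple, real_inner_self_eq_norm_sq]; ring

def PreservesArea (φ : E → E) : Prop :=
  ∀ a b, areaSq (φ a) (φ b) = areaSq a b

namespace PreservesArea

open QuadraticMap

variable {φ : E → E}

theorem map_zero (hφ : PreservesArea φ) (hdim : ¬ FiniteDimensional ℝ E)
    (hsurj : Function.Surjective φ) : φ 0 = 0 := by
  by_contra h0
  obtain ⟨e, he0, he⟩ := exists_ne_zero_forall_inner_eq_zero hdim (Set.finite_singleton (φ 0))
  obtain ⟨b, rfl⟩ := hsurj e
  have h := areaSq_ne_zero_of_inner_eq_zero (he _ rfl) h0 he0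
  rw [hφ, areaSq_zero_left] at h
  exact h rfl

theorem areaSq_map_add_add_areaSq_map_sub (hφ : PreservesArea φ) (hsurj : Function.Surjective φ)
    (a b e : E) :
    areaSq (φ (a + b)) e + areaSq (φ (a - b)) e = 2 * areaSq (φ a) e + 2 * areaSq (φ b) e := by
  obtain ⟨d, rfl⟩ := hsurj e
  simpa only [hφ _ d] using areaSq_add_add_areaSq_sub a b d

theorem norm_map_add_sq_add_norm_map_sub_sq (hφ : PreservesArea φ)
    (hdim : ¬ FiniteDimensional ℝ E) (hsurj : Function.Surjective φ) (a b : E) :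
    ‖φ (a + b)‖ ^ 2 + ‖φ (a - b)‖ ^ 2 = 2 * ‖φ a‖ ^ 2 + 2 * ‖φ b‖ ^ 2 := by
  obtain ⟨e, he0, he⟩ := exists_ne_zero_forall_inner_eq_zero hdim
    (s := {φ (a + b), φ (a - b), φ a, φ b}) (Set.toFinite _)
  have h := hφ.areaSq_map_add_add_areaSq_map_sub hsurj a b e
  rw [areaSq_of_inner_eq_zero (he (φ (a + b)) (by simp)),
    areaSq_of_inner_eq_zero (he (φ (a - b)) (by simp)), areaSq_of_inner_eq_zero (he (φ a) (by simp)),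
    areaSq_of_inner_eq_zero (he (φ b) (by simp))] at h
  apply mul_right_cancel₀ (pow_ne_zero 2 (norm_ne_zero_iff.2 he0))
  linear_combination h

theorem inner_map_add_sq_add_inner_map_sub_sq (hφ : PreservesArea φ)
    (hdim : ¬ FiniteDimensional ℝ E) (hsurj : Function.Surjective φ) (a b e : E) :
    ⟪φ (a + b), e⟫ ^ 2 + ⟪φ (a - b), e⟫ ^ 2 = 2 * ⟪φ a, e⟫ ^ 2 + 2 * ⟪φ b, e⟫ ^ 2 := by
  have h := hφ.areaSq_map_add_add_areaSq_map_sub hsurj a b e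
  simp only [areaSq] at h
  linear_combination ‖e‖ ^ 2 * hφ.norm_map_add_sq_add_norm_map_sub_sq hdim hsurj a b - h

theorem map_add_mem_span (hφ : PreservesArea φ) (hdim : ¬ FiniteDimensional ℝ E)
    (hsurj : Function.Surjective φ) (a b : E) :
    φ (a + b) ∈ Submodule.span ℝ {φ a, φ b} := by
  set U := Submodule.span ℝ {φ a, φ b}
  have : FiniteDimensional ℝ U := FiniteDimensional.span_of_finite ℝ (Set.toFinite _)
  rw [← Submodule.orthogonal_orthogonal U, Submodule.mem_orthogonal]
  intro e he
  have hU : ∀ v ∈ ({φ a, φ b} : Set E), ⟪v, e⟫ = 0 := fun v hv =>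
    (Submodule.mem_orthogonal U e).1 he v (Submodule.subset_span hv)
  have h := hφ.inner_map_add_sq_add_inner_map_sub_sq hdim hsurj a b e
  rw [hU (φ a) (by simp), hU (φ b) (by simp)] at h
  rw [real_inner_comm]
  nlinarith [sq_nonneg ⟪φ (a + b), e⟫, sq_nonneg ⟪φ (a - b), e⟫]

theorem exists_map_add_eq (hφ : PreservesArea φ) (hdim : ¬ FiniteDimensional ℝ E)
    (hsurj : Function.Surjective φ) {a b : E} (hab : areaSq a b ≠ 0) :
    ∃ x y : ℝ, x ^ 2 = 1 ∧ y ^ 2 = 1 ∧ φ (a + b) = x • φ a + y • φ b := by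
  obtain ⟨x, y, hxy⟩ := Submodule.mem_span_pair.1 (hφ.map_add_mem_span hdim hsurj a b)
  refine ⟨x, y, mul_right_cancel₀ hab ?_, mul_right_cancel₀ hab ?_, hxy.symm⟩
  · have h := hφ (a + b) b
    rw [← hxy, areaSq_add_smul_left, areaSq_smul_left, hφ, areaSq_add_left] at h
    linear_combination h
  · have h := hφ (a + b) a
    rw [← hxy, areaSq_smul_add_left, areaSq_smul_left, hφ, areaSq_add_right, areaSq_comm b] at h
    linear_combination h

theorem polar_normSq_map_add_right (hφ : PreservesArea φ) (hdim : ¬ FiniteDimensional ℝ E)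
    (hsurj : Function.Surjective φ) (a b c : E) :
    polar (fun v => ‖φ v‖ ^ 2) a (b + c) =
      polar (fun v => ‖φ v‖ ^ 2) a b + polar (fun v => ‖φ v‖ ^ 2) a c := by
  have par := hφ.norm_map_add_sq_add_norm_map_sub_sq hdim hsurj
  have h₁ := par (a + b) c
  have h₂ := par (a + c) b
  have h₃ := par a (b - c)
  have h₄ := par b c
  rw [add_right_comm, show a + c - b = a - b + c by abel] at h₂
  rw [show a + (b - c) = a + b - c by abel, show a - (b - c) = a - b + c by abel] at h₃
  simp only [polar, ← add_assoc]
  linarith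

theorem sq_polar_normSq_map (hφ : PreservesArea φ) (hdim : ¬ FiniteDimensional ℝ E)
    (hsurj : Function.Surjective φ) {a b : E} (hab : areaSq a b ≠ 0) :
    polar (fun v => ‖φ v‖ ^ 2) a b ^ 2 = 4 * (‖φ a‖ ^ 2 * ‖φ b‖ ^ 2 - areaSq a b) := by
  obtain ⟨x, y, hx, hy, hxy⟩ := hφ.exists_map_add_eq hdim hsurj hab
  have hpolar : polar (fun v => ‖φ v‖ ^ 2) a b = 2 * (x * y) * ⟪φ a, φ b⟫ := by
    simp only [polar, hxy, norm_add_sq_real, norm_smul, real_inner_smul_left,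
      real_inner_smul_right, mul_pow, Real.norm_eq_abs, sq_abs, hx, hy]
    ring
  rw [hpolar, ← hφ a b, areaSq]
  linear_combination (4 * y ^ 2 * ⟪φ a, φ b⟫ ^ 2) * hx + (4 * ⟪φ a, φ b⟫ ^ 2) * hy

theorem sq_polar_normSq_map_of_inner_eq_zero (hφ : PreservesArea φ)
    (hdim : ¬ FiniteDimensional ℝ E) (hsurj : Function.Surjective φ) {a b : E} (ha : a ≠ 0)
    (hb : b ≠ 0) (hab : ⟪a, b⟫ = 0) :
    polar (fun v => ‖φ v‖ ^ 2) a b ^ 2 = 4 * (‖φ a‖ ^ 2 * ‖φ b‖ ^ 2 - ‖a‖ ^ 2 * ‖b‖ ^ 2) := by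
  rw [hφ.sq_polar_normSq_map hdim hsurj (areaSq_ne_zero_of_inner_eq_zero hab ha hb),
    areaSq_of_inner_eq_zero hab]

theorem polar_normSq_map_mul_polar_normSq_map (hφ : PreservesArea φ)
    (hdim : ¬ FiniteDimensional ℝ E) (hsurj : Function.Surjective φ) {u w w' : E} (hu : u ≠ 0)
    (hw : w ≠ 0) (hw' : w' ≠ 0) (huw : ⟪u, w⟫ = 0) (huw' : ⟪u, w'⟫ = 0) (hww' : ⟪w, w'⟫ = 0) :
    polar (fun v => ‖φ v‖ ^ 2) u w * polar (fun v => ‖φ v‖ ^ 2) u w' =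
      2 * ‖φ u‖ ^ 2 * polar (fun v => ‖φ v‖ ^ 2) w w' := by
  have hsq {v : E} (hv : v ≠ 0) (huv : ⟪u, v⟫ = 0) :=
    hφ.sq_polar_normSq_map_of_inner_eq_zero hdim hsurj hu hv huv
  have hsum : w + w' ≠ 0 := fun h => hw <| by
    simpa [inner_add_right, hww'] using congrArg (⟪w, ·⟫) h
  have h := hsq hsum (by rw [inner_add_right, huw, huw', add_zero])
  have hmap := QuadraticMap.map_add (fun v => ‖φ v‖ ^ 2) w w'
  rw [hφ.polar_normSq_map_add_right hdim hsurj, hmap, norm_add_sq_real, hww'] at h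
  linear_combination (h - hsq hw huw - hsq hw' huw') / 2

theorem norm_map (hφ : PreservesArea φ) (hdim : ¬ FiniteDimensional ℝ E)
    (hsurj : Function.Surjective φ) (v : E) : ‖φ v‖ = ‖v‖ := by
  rcases eq_or_ne v 0 with rfl | hv
  · rw [hφ.map_zero hdim hsurj]
  obtain ⟨e₂, he₂, h₂⟩ := exists_ne_zero_forall_inner_eq_zero hdim (Set.finite_singleton v)
  obtain ⟨e₃, he₃, h₃⟩ := exists_ne_zero_forall_inner_eq_zero hdim (Set.toFinite {v, e₂})
  have o₁₂ : ⟪v, e₂⟫ = 0 := h₂ v rfl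
  have o₁₃ : ⟪v, e₃⟫ = 0 := h₃ v (by simp)
  have o₂₃ : ⟪e₂, e₃⟫ = 0 := h₃ e₂ (by simp)
  have hsq {x y : E} (hx : x ≠ 0) (hy : y ≠ 0) (hxy : ⟪x, y⟫ = 0) :=
    hφ.sq_polar_normSq_map_of_inner_eq_zero hdim hsurj hx hy hxy
  have k₂ := hφ.polar_normSq_map_mul_polar_normSq_map hdim hsurj he₂ hv he₃
    (inner_eq_zero_symm.1 o₁₂) o₂₃ o₁₃
  have k₃ := hφ.polar_normSq_map_mul_polar_normSq_map hdim hsurj he₃ hv he₂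
    (inner_eq_zero_symm.1 o₁₃) (inner_eq_zero_symm.1 o₂₃) o₁₂
  rw [polar_comm _ e₂ v] at k₂
  rw [polar_comm _ e₃ v, polar_comm _ e₃ e₂] at k₃
  have key := eq_of_gram_relations (sq_nonneg ‖φ v‖) (by positivity) (by positivity)
    (by positivity) (hsq hv he₂ o₁₂) (hsq hv he₃ o₁₃) (hsq he₂ he₃ o₂₃)
    (hφ.polar_normSq_map_mul_polar_normSq_map hdim hsurj hv he₂ he₃ o₁₂ o₁₃ o₂₃) k₂ k₃
  exact (pow_left_inj₀ (norm_nonneg _) (norm_nonneg _) two_ne_zero).1 key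

theorem inner_map_sq (hφ : PreservesArea φ) (hdim : ¬ FiniteDimensional ℝ E)
    (hsurj : Function.Surjective φ) (a b : E) : ⟪φ a, φ b⟫ ^ 2 = ⟪a, b⟫ ^ 2 := by
  have h := hφ a b
  rw [areaSq, areaSq, hφ.norm_map hdim hsurj, hφ.norm_map hdim hsurj] at h
  linarith

theorem inner_map_eq_zero (hφ : PreservesArea φ) (hdim : ¬ FiniteDimensional ℝ E)
    (hsurj : Function.Surjective φ) {a b : E} (h : ⟪a, b⟫ = 0) : ⟪φ a, φ b⟫ = 0 := by
  simpa [h] using hφ.inner_map_sq hdim hsurj a b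

theorem exists_map_smul_eq (hφ : PreservesArea φ) (hdim : ¬ FiniteDimensional ℝ E)
    (hsurj : Function.Surjective φ) (t : ℝ) (a : E) :
    ∃ μ : ℝ, μ ^ 2 = t ^ 2 ∧ φ (t • a) = μ • φ a := by
  rcases eq_or_ne a 0 with rfl | ha
  · exact ⟨t, rfl, by rw [smul_zero, hφ.map_zero hdim hsurj, smul_zero]⟩
  have hφa : φ a ≠ 0 := by
    rw [← norm_ne_zero_iff, hφ.norm_map hdim hsurj]; exact norm_ne_zero_iff.2 ha
  obtain ⟨μ, hμ⟩ := exists_eq_smul_of_areaSq_eq_zero (b := φ (t • a)) hφa <| by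
    rw [hφ, areaSq_smul_right, areaSq_self, mul_zero]
  refine ⟨μ, ?_, hμ⟩
  have h := congrArg (‖·‖) hμ
  simp only [hφ.norm_map hdim hsurj, norm_smul, Real.norm_eq_abs] at h
  rw [← sq_abs μ, ← sq_abs t, mul_right_cancel₀ (norm_ne_zero_iff.2 ha) h]

theorem innerTriple_map_of_add_ne_zero (hφ : PreservesArea φ) (hdim : ¬ FiniteDimensional ℝ E)
    (hsurj : Function.Surjective φ) {a b c : E} (hab : areaSq a b ≠ 0)
    (habc : areaSq (a + b) c ≠ 0) (hp : ⟪a, b⟫ ≠ 0) (hq : ⟪b, c⟫ ≠ 0) (hr : ⟪a, c⟫ ≠ 0)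
    (hpqr : ⟪a, b⟫ + ⟪b, c⟫ + ⟪a, c⟫ ≠ 0) :
    innerTriple (φ a) (φ b) (φ c) = innerTriple a b c := by
  obtain ⟨x, y, hx, hy, hxy⟩ := hφ.exists_map_add_eq hdim hsurj habc
  obtain ⟨x', y', hx', hy', hxy'⟩ := hφ.exists_map_add_eq hdim hsurj hab
  have hnorm := congrArg (· ^ 2) (hφ.norm_map hdim hsurj (a + b + c))
  simp only [hxy, hxy', ← real_inner_self_eq_norm_sq, inner_add_left, inner_add_right,
    real_inner_smul_left, real_inner_smul_right] at hnorm
  have hself (v : E) : ⟪φ v, φ v⟫ = ⟪v, v⟫ := by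
    rw [real_inner_self_eq_norm_sq, real_inner_self_eq_norm_sq, hφ.norm_map hdim hsurj]
  rw [hself, hself, hself, real_inner_comm (φ a) (φ b), real_inner_comm (φ a) (φ c),
    real_inner_comm (φ b) (φ c), real_inner_comm a b, real_inner_comm a c,
    real_inner_comm b c] at hnorm
  refine mul_mul_eq_of_signed_sum_eq (hφ.inner_map_sq hdim hsurj a b)
    (hφ.inner_map_sq hdim hsurj b c) (hφ.inner_map_sq hdim hsurj a c)
    (α := x * x') (β := x * y') (γ := y) (by rw [mul_pow, hx, hx', one_mul])
    (by rw [mul_pow, hx, hy', one_mul]) hy hp hq hr hpqr ?_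
  linear_combination hnorm / 2 - (x' ^ 2 * ⟪a, a⟫ / 2) * hx - (⟪a, a⟫ / 2) * hx' -
    (y' ^ 2 * ⟪b, b⟫ / 2) * hx - (⟪b, b⟫ / 2) * hy' - (⟪c, c⟫ / 2) * hy

theorem innerTriple_map_of_areaSq_ne_zero (hφ : PreservesArea φ)
    (hdim : ¬ FiniteDimensional ℝ E) (hsurj : Function.Surjective φ) {a b c : E}
    (hab : areaSq a b ≠ 0) (habc : areaSq (a + b) c ≠ 0) (hp : ⟪a, b⟫ ≠ 0) (hq : ⟪b, c⟫ ≠ 0)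
    (hr : ⟪a, c⟫ ≠ 0) : innerTriple (φ a) (φ b) (φ c) = innerTriple a b c := by
  by_cases hpqr : ⟪a, b⟫ + ⟪b, c⟫ + ⟪a, c⟫ = 0
  · obtain ⟨μ, hμ, hφc⟩ := hφ.exists_map_smul_eq hdim hsurj 2 c
    have h := hφ.innerTriple_map_of_add_ne_zero hdim hsurj hab (c := (2 : ℝ) • c)
      (by rw [areaSq_smul_right]; exact mul_ne_zero (by norm_num) habc) hp
      (by rw [real_inner_smul_right]; exact mul_ne_zero two_ne_zero hq)
      (by rw [real_inner_smul_right]; exact mul_ne_zero two_ne_zero hr)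
      (by rw [real_inner_smul_right, real_inner_smul_right]; intro h; apply hp; linarith)
    rw [hφc, innerTriple_smul_right, innerTriple_smul_right, hμ] at h
    exact mul_left_cancel₀ (by norm_num) h
  · exact hφ.innerTriple_map_of_add_ne_zero hdim hsurj hab habc hp hq hr hpqr

theorem innerTriple_map (hφ : PreservesArea φ) (hdim : ¬ FiniteDimensional ℝ E)
    (hsurj : Function.Surjective φ) (a b c : E) :
    innerTriple (φ a) (φ b) (φ c) = innerTriple a b c := by
  have hzero {x y : E} (h : ⟪x, y⟫ = 0) := hφ.inner_map_eq_zero hdim hsurj h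
  rcases eq_or_ne ⟪a, b⟫ 0 with hp | hp
  · simp [innerTriple, hp, hzero hp]
  rcases eq_or_ne ⟪b, c⟫ 0 with hq | hq
  · simp [innerTriple, hq, hzero hq]
  rcases eq_or_ne ⟪a, c⟫ 0 with hr | hr
  · simp [innerTriple, hr, hzero hr]
  have ha : a ≠ 0 := by rintro rfl; simp at hp
  have hc : c ≠ 0 := by rintro rfl; simp at hq
  by_cases hab : areaSq a b = 0
  · obtain ⟨t, rfl⟩ := exists_eq_smul_of_areaSq_eq_zero ha hab
    obtain ⟨μ, hμ, hφb⟩ := hφ.exists_map_smul_eq hdim hsurj t a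
    rw [hφb, innerTriple_smul_middle, innerTriple_smul_middle, hμ, innerTriple_self_left,
      innerTriple_self_left, hφ.norm_map hdim hsurj, hφ.inner_map_sq hdim hsurj]
  by_cases habc : areaSq (a + b) c = 0
  · obtain ⟨μ, hμ, hφa⟩ := hφ.exists_map_smul_eq hdim hsurj 2 a
    have h := hφ.innerTriple_map_of_areaSq_ne_zero hdim hsurj
      (by rw [areaSq_smul_left]; exact mul_ne_zero (by norm_num) hab)
      (areaSq_two_smul_add_ne_zero hab hc habc)
      (by rw [real_inner_smul_left]; exact mul_ne_zero two_ne_zero hp) hq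
      (by rw [real_inner_smul_left]; exact mul_ne_zero two_ne_zero hr)
    rw [hφa, innerTriple_smul_left, innerTriple_smul_left, hμ] at h
    exact mul_left_cancel₀ (by norm_num) h
  exact hφ.innerTriple_map_of_areaSq_ne_zero hdim hsurj hab habc hp hq hr

theorem exists_linearIsometryEquiv_map_eq_or_eq_neg (hφ : PreservesArea φ)
    (hdim : ¬ FiniteDimensional ℝ E) (hsurj : Function.Surjective φ) :
    ∃ R : E ≃ₗᵢ[ℝ] E, ∀ a, φ a = R a ∨ φ a = -R a := by
  have : Nontrivial E := by
    obtain ⟨e, he, -⟩ := exists_ne_zero_forall_inner_eq_zero hdim Set.finite_empty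
    exact ⟨⟨e, 0, he⟩⟩
  obtain ⟨ε, hε, hερ⟩ := exists_sign_of_cocycle (fun x y => ⟪φ x, φ y⟫ / ⟪x, y⟫)
    (fun x y h => by rw [div_pow, hφ.inner_map_sq hdim hsurj, div_self (pow_ne_zero 2 h)])
    (fun x y z hxy hyz hxz => by
      have h := hφ.innerTriple_map hdim hsurj x y z
      rw [innerTriple, innerTriple] at h
      field_simp
      exact h)
  have hψ (a b : E) : ⟪ε a • φ a, ε b • φ b⟫ = ⟪a, b⟫ := by
    rw [real_inner_smul_left, real_inner_smul_right]
    rcases eq_or_ne ⟪a, b⟫ 0 with h | h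
    · rw [hφ.inner_map_eq_zero hdim hsurj h, h, mul_zero, mul_zero]
    · have h' := hερ a b h
      field_simp at h'
      linear_combination h'
  obtain ⟨L, hL⟩ := exists_linearIsometry_of_inner_map_map hψ
  have hφL (a : E) : φ a = L a ∨ φ a = -L a := by
    rcases eq_or_ne a 0 with rfl | ha
    · left; rw [L.map_zero, hφ.map_zero hdim hsurj]
    rw [hL]
    rcases sq_eq_one_iff.1 (hε a ha) with h | h <;> simp [h]
  have hLsurj : Function.Surjective L := fun z => by
    obtain ⟨a, rfl⟩ := hsurj z
    rcases hφL a with h | h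
    · exact ⟨a, h.symm⟩
    · exact ⟨-a, by rw [map_neg, h]⟩
  exact ⟨LinearIsometryEquiv.ofSurjective L hLsurj, hφL⟩

end PreservesArea

end

theorem stmt2_general {E : Type*} [NormedAddCommGroup E] [InnerProductSpace ℝ E]
    (hdim : ¬ FiniteDimensional ℝ E)
    (φ : E → E) (hbij : Function.Bijective φ)
    (hφ : ∀ a b : E, parArea (φ a) (φ b) = parArea a b) :
    ∃ (ε : E → ℝ) (R : E ≃ₗᵢ[ℝ] E),
      (∀ a, ε a = 1 ∨ ε a = -1) ∧
      ∀ a, φ a = ε a • R a := by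
  classical
  have harea : PreservesArea φ := fun a b =>
    (Real.sqrt_inj (areaSq_nonneg _ _) (areaSq_nonneg _ _)).1 (hφ a b)
  obtain ⟨R, hR⟩ := harea.exists_linearIsometryEquiv_map_eq_or_eq_neg hdim hbij.2
  refine ⟨fun a => if φ a = R a then 1 else -1, R, fun a => ?_, fun a => ?_⟩ <;>
    dsimp only <;> split_ifs with h
  · exact Or.inl rfl
  · exact Or.inr rfl
  · rw [h, one_smul]
  · rw [(hR a).resolve_left h, neg_one_smul]

/-- any bijection of an infinite-dimensional real Hilbert space
preserving the area of parallelograms is, up to signs, a linear surjective isometry. -/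
theorem stmt2 {E : Type*} [NormedAddCommGroup E] [InnerProductSpace ℝ E] [CompleteSpace E]
    (hdim : ¬ FiniteDimensional ℝ E)
    (φ : E → E) (hbij : Function.Bijective φ)
    (hφ : ∀ a b : E, parArea (φ a) (φ b) = parArea a b) :
    ∃ (ε : E → ℝ) (R : E ≃ₗᵢ[ℝ] E),
      (∀ a, ε a = 1 ∨ ε a = -1) ∧
      ∀ a, φ a = ε a • R a :=
  stmt2_general hdim φ hbij hφ
end

section
/- Let d ≥ 3 and let A : ℝ^d → ℝ^d be a linear operator. Then Area(A a, A b) = Area(a, b) holds for all a, b ∈ ℝ^d if and only if A is orthogonal (i.e. A is a linear isometry). -/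
open Module LinearMap RealInnerProductSpace

lemma eq_one_of_pairwise_mul_eq_one {ι : Type*} [Fintype ι] (hι : 3 ≤ Fintype.card ι) {μ : ι → ℝ}
    (hμ : ∀ i, 0 ≤ μ i) (h : ∀ i j, i ≠ j → μ i * μ j = 1) (i : ι) : μ i = 1 := by
  classical
  obtain ⟨j, hj, k, hk, hjk⟩ : ∃ j ∈ Finset.univ.erase i, ∃ k ∈ Finset.univ.erase i, j ≠ k := by
    refine Finset.one_lt_card.mp ?_
    rw [Finset.card_erase_of_mem (Finset.mem_univ i), Finset.card_univ]
    omega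
  have hsq : μ i ^ 2 = 1 := by
    linear_combination (-μ i ^ 2) * h j k hjk + (μ i * μ k) * h i j (Finset.ne_of_mem_erase hj).symm
      + h i k (Finset.ne_of_mem_erase hk).symm
  exact (pow_eq_one_iff_of_nonneg (hμ i) two_ne_zero).mp hsq

section

variable {E F : Type*} [NormedAddCommGroup E] [InnerProductSpace ℝ E]
  [NormedAddCommGroup F] [InnerProductSpace ℝ F]

lemma sq_parArea (a b : E) : parArea a b ^ 2 = ‖a‖ ^ 2 * ‖b‖ ^ 2 - ⟪a, b⟫ ^ 2 :=
  Real.sq_sqrt <| by nlinarith [abs_real_inner_le_norm a b, sq_abs ⟪a, b⟫, abs_nonneg ⟪a, b⟫]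

lemma parArea_map_of_norm_map {A : E →ₗ[ℝ] F} (hA : ∀ x, ‖A x‖ = ‖x‖) (a b : E) :
    parArea (A a) (A b) = parArea a b := by
  rw [parArea, parArea, hA, hA, (norm_map_iff_inner_map_map A).mp hA]

variable [FiniteDimensional ℝ E] [FiniteDimensional ℝ F]

lemma norm_map_of_parArea_map (hE : 3 ≤ finrank ℝ E) {A : E →ₗ[ℝ] F}
    (hA : ∀ a b, parArea (A a) (A b) = parArea a b) (x : E) : ‖A x‖ = ‖x‖ := by
  have hP := A.isPositive_adjoint_comp_self
  set e := hP.isSymmetric.eigenvectorBasis rfl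
  set μ := hP.isSymmetric.eigenvalues rfl
  have apply_eigenvector (i) : (A.adjoint ∘ₗ A) (e i) = μ i • e i :=
    hP.isSymmetric.apply_eigenvectorBasis rfl i
  have inner_map_eigenvector (i j) : ⟪A (e i), A (e j)⟫ = if i = j then μ i else 0 := by
    rw [← adjoint_inner_right, ← comp_apply, apply_eigenvector, real_inner_smul_right,
      e.inner_eq_ite]
    split_ifs <;> simp_all
  have hμ : ∀ i, μ i = 1 := by
    refine eq_one_of_pairwise_mul_eq_one (by simpa using hE) (hP.nonneg_eigenvalues rfl)
      fun i j hij => ?_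
    have := congrArg (· ^ 2) (hA (e i) (e j))
    simp only [sq_parArea, ← real_inner_self_eq_norm_sq, inner_map_eigenvector,
      e.inner_eq_ite] at this
    simpa [hij] using this
  have hAA : A.adjoint ∘ₗ A = LinearMap.id :=
    e.toBasis.ext fun i => by simp [apply_eigenvector, hμ]
  refine (norm_map_iff_inner_map_map A).mpr (fun x y => ?_) x
  rw [← adjoint_inner_right, ← comp_apply, hAA, id_apply]

end

/-- for `d ≥ 3`, a linear operator on `ℝ^d` preserves the area of
parallelograms if and only if it is orthogonal, i.e. a linear isometry. -/
theorem stmt7 {d : ℕ} (hd : 3 ≤ d)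
    (A : EuclideanSpace ℝ (Fin d) →ₗ[ℝ] EuclideanSpace ℝ (Fin d)) :
    (∀ a b : EuclideanSpace ℝ (Fin d), parArea (A a) (A b) = parArea a b) ↔
      (∀ x : EuclideanSpace ℝ (Fin d), ‖A x‖ = ‖x‖) :=
  ⟨norm_map_of_parArea_map (by simpa using hd), parArea_map_of_norm_map⟩
end

section
/- Let E be a real Hilbert space with dim E ≥ 2 and let φ : E → E be a map such that Area(φ(a), φ(b)) = Area(a, b) for all a, b ∈ E. Then for every v ∈ E and every t ∈ ℝ one has φ(t · v) = t · φ(v) or φ(t · v) = −t · φ(v). -/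
section parArea

variable {E : Type*} [NormedAddCommGroup E] [InnerProductSpace ℝ E]

lemma parArea_smul_left (t : ℝ) (a b : E) : parArea (t • a) b = |t| * parArea a b := by
  have h : ‖t • a‖ ^ 2 * ‖b‖ ^ 2 - (inner ℝ (t • a) b) ^ 2
      = t ^ 2 * (‖a‖ ^ 2 * ‖b‖ ^ 2 - (inner ℝ a b) ^ 2) := by
    rw [norm_smul, real_inner_smul_left, Real.norm_eq_abs, mul_pow, sq_abs]
    ring
  rw [parArea, h, Real.sqrt_mul (sq_nonneg t), Real.sqrt_sq_eq_abs, parArea]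

lemma parArea_comm (a b : E) : parArea a b = parArea b a := by
  rw [parArea, parArea, real_inner_comm, mul_comm]

lemma parArea_zero_left (b : E) : parArea 0 b = 0 := by
  simpa using parArea_smul_left 0 (0 : E) b

lemma parArea_eq_zero_iff (a b : E) : parArea a b = 0 ↔ a = 0 ∨ ∃ r : ℝ, b = r • a := by
  have key : ‖(inner ℝ a b : ℝ)‖ = ‖a‖ * ‖b‖ ↔ a = 0 ∨ ∃ r : ℝ, b = r • a :=
    (norm_inner_eq_norm_tfae (𝕜 := ℝ) a b).out 0 2
  rw [parArea, Real.sqrt_eq_zero', ← key, Real.norm_eq_abs,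
    ← sq_eq_sq₀ (abs_nonneg _) (by positivity), sq_abs]
  -- Cauchy–Schwarz makes the radicand nonnegative, so `≤ 0` means `= 0`.
  have hcs : (inner ℝ a b) ^ 2 ≤ (‖a‖ * ‖b‖) ^ 2 := by
    rw [← sq_abs]
    exact pow_le_pow_left₀ (abs_nonneg _) (abs_real_inner_le_norm a b) 2
  constructor <;> intro h <;> nlinarith

lemma parArea_self (a : E) : parArea a a = 0 :=
  (parArea_eq_zero_iff a a).mpr (.inr ⟨1, (one_smul ℝ a).symm⟩)

lemma exists_parArea_ne_zero (hE : 1 < Module.rank ℝ E) {v : E} (hv : v ≠ 0) :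
    ∃ w : E, parArea v w ≠ 0 := by
  obtain ⟨w, hvw⟩ := exists_linearIndependent_pair_of_one_lt_rank hE hv
  refine ⟨w, fun h => ?_⟩
  obtain rfl | ⟨r, rfl⟩ := (parArea_eq_zero_iff v w).mp h
  · exact hv rfl
  · simpa using LinearIndependent.pair_iff.mp hvw (-r) 1 (by simp)

section AreaPreserving

variable (hE : 1 < Module.rank ℝ E) {φ : E → E}
  (hφ : ∀ a b : E, parArea (φ a) (φ b) = parArea a b)
include hE hφ

lemma map_zero_of_parArea_eq : φ 0 = 0 := by
  have : Nontrivial E := rank_pos_iff_nontrivial.mp (zero_lt_one.trans hE)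
  obtain ⟨a, ha⟩ := exists_ne (0 : E)
  obtain ⟨w, hw⟩ := exists_parArea_ne_zero hE ha
  by_contra h0
  have parallel (c : E) : ∃ r : ℝ, φ c = r • φ 0 :=
    ((parArea_eq_zero_iff _ _).mp (by rw [hφ, parArea_zero_left])).resolve_left h0
  obtain ⟨r, hr⟩ := parallel a
  obtain ⟨r', hr'⟩ := parallel w
  apply hw
  rw [← hφ, hr, hr', parArea_smul_left, parArea_comm, parArea_smul_left, parArea_self]
  ring

theorem map_smul_eq_or_eq_neg_smul_of_parArea_eq (v : E) (t : ℝ) :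
    φ (t • v) = t • φ v ∨ φ (t • v) = (-t) • φ v := by
  rcases eq_or_ne v 0 with rfl | hv
  · simp [map_zero_of_parArea_eq hE hφ]
  obtain ⟨w, hw⟩ := exists_parArea_ne_zero hE hv
  have hφv : φ v ≠ 0 := fun h => hw (by rw [← hφ, h, parArea_zero_left])
  obtain ⟨s, hs⟩ : ∃ s : ℝ, φ (t • v) = s • φ v :=
    ((parArea_eq_zero_iff _ _).mp
      (by rw [hφ, parArea_eq_zero_iff]; exact .inr ⟨t, rfl⟩)).resolve_left hφv
  have habs : |s| = |t| := by
    refine mul_right_cancel₀ hw ?_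
    calc |s| * parArea v w = parArea (φ (t • v)) (φ w) := by rw [hs, parArea_smul_left, hφ]
      _ = |t| * parArea v w := by rw [hφ, parArea_smul_left]
  rw [hs]
  rcases abs_eq_abs.mp habs with rfl | rfl
  · exact .inl rfl
  · exact .inr rfl

end AreaPreserving

end parArea

theorem stmt9_general {E : Type*} [NormedAddCommGroup E] [InnerProductSpace ℝ E]
    (hdim : 2 ≤ Module.rank ℝ E)
    (φ : E → E)
    (hφ : ∀ a b : E, parArea (φ a) (φ b) = parArea a b) :
    ∀ (v : E) (t : ℝ), φ (t • v) = t • φ v ∨ φ (t • v) = (-t) • φ v :=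
  map_smul_eq_or_eq_neg_smul_of_parArea_eq (Cardinal.one_lt_two.trans_le hdim) hφ

/-- an area-preserving map of a real Hilbert space of dimension at
least `2` is quasi-homogeneous: `φ(t v) = ± t φ(v)`. -/
theorem stmt9 {E : Type*} [NormedAddCommGroup E] [InnerProductSpace ℝ E] [CompleteSpace E]
    (hdim : 2 ≤ Module.rank ℝ E)
    (φ : E → E)
    (hφ : ∀ a b : E, parArea (φ a) (φ b) = parArea a b) :
    ∀ (v : E) (t : ℝ), φ (t • v) = t • φ v ∨ φ (t • v) = (-t) • φ v :=
  stmt9_general hdim φ hφ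
end

section
/- Let E be a real Hilbert space with dim E ≥ 2 and let φ : E → E be a map such that Area(φ(a), φ(b)) = Area(a, b) for all a, b ∈ E. Then φ(v) = 0 holds if and only if v = 0, and for all a, b ∈ E the vectors φ(a), φ(b) are linearly independent if and only if a, b are linearly independent. -/
section LinearIndependentPair

variable {K V : Type*} [Field K] [AddCommGroup V] [Module K V]

theorem not_linearIndependent_pair_iff (x y : V) :
    ¬LinearIndependent K ![x, y] ↔ x = 0 ∨ ∃ r : K, y = r • x := by
  rcases eq_or_ne x 0 with rfl | hx
  · simpa using fun h => h.ne_zero 0 rfl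
  · simp [LinearIndependent.pair_iff' hx, hx, eq_comm]

theorem eq_zero_of_not_linearIndependent_pair {x y z : V} (hxy : LinearIndependent K ![x, y])
    (hxz : ¬LinearIndependent K ![x, z]) (hyz : ¬LinearIndependent K ![y, z]) : z = 0 := by
  obtain hx | ⟨r, rfl⟩ := (not_linearIndependent_pair_iff x z).1 hxz
  · exact absurd hx (hxy.ne_zero 0)
  obtain hy | ⟨s, hs⟩ := (not_linearIndependent_pair_iff y _).1 hyz
  · exact absurd hy (hxy.ne_zero 1)
  obtain ⟨rfl, -⟩ := LinearIndependent.pair_iff.1 hxy r (-s) (by rw [neg_smul, hs, add_neg_cancel])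
  exact zero_smul K x

end LinearIndependentPair

section Area

variable {E : Type*} [NormedAddCommGroup E] [InnerProductSpace ℝ E]

theorem real_inner_sq_lt_iff_linearIndependent (a b : E) :
    inner ℝ a b ^ 2 < ‖a‖ ^ 2 * ‖b‖ ^ 2 ↔ LinearIndependent ℝ ![a, b] := by
  have cauchy_schwarz_eq := (norm_inner_eq_norm_tfae ℝ a b).out 0 2
  rw [← not_iff_not, not_lt, not_linearIndependent_pair_iff, ← cauchy_schwarz_eq,
    Real.norm_eq_abs, ← mul_pow, ← sq_abs (inner ℝ a b),
    pow_le_pow_iff_left₀ (by positivity) (abs_nonneg _) two_ne_zero, le_antisymm_iff,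
    and_iff_right (abs_real_inner_le_norm a b)]

theorem parArea_pos_iff (a b : E) : 0 < parArea a b ↔ LinearIndependent ℝ ![a, b] := by
  rw [parArea, Real.sqrt_pos, sub_pos, real_inner_sq_lt_iff_linearIndependent]

end Area

theorem stmt10_general {E : Type*} [NormedAddCommGroup E] [InnerProductSpace ℝ E]
    (hdim : 2 ≤ Module.rank ℝ E)
    (φ : E → E)
    (hφ : ∀ a b : E, parArea (φ a) (φ b) = parArea a b) :
    (∀ v : E, φ v = 0 ↔ v = 0) ∧
    (∀ a b : E, LinearIndependent ℝ ![φ a, φ b] ↔ LinearIndependent ℝ ![a, b]) := by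
  have hli (a b : E) : LinearIndependent ℝ ![φ a, φ b] ↔ LinearIndependent ℝ ![a, b] := by
    rw [← parArea_pos_iff, ← parArea_pos_iff, hφ]
  have hrank : 1 < Module.rank ℝ E := lt_of_lt_of_le (by norm_num) hdim
  have hφ_ne_zero (v : E) (hv : v ≠ 0) : φ v ≠ 0 := by
    obtain ⟨w, hvw⟩ := exists_linearIndependent_pair_of_one_lt_rank hrank hv
    exact ((hli v w).2 hvw).ne_zero 0
  have hφ_zero : φ 0 = 0 := by
    have : Nontrivial E := rank_pos_iff_nontrivial.1 (zero_lt_one.trans hrank)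
    obtain ⟨v, hv⟩ := exists_ne (0 : E)
    obtain ⟨w, hvw⟩ := exists_linearIndependent_pair_of_one_lt_rank hrank hv
    refine eq_zero_of_not_linearIndependent_pair ((hli v w).2 hvw) ?_ ?_ <;>
      (rw [← parArea_pos_iff, hφ]; simp [parArea])
  exact ⟨fun v => ⟨not_imp_not.1 (hφ_ne_zero v), by rintro rfl; exact hφ_zero⟩, hli⟩

/-- an area-preserving map of a real Hilbert space of dimension at
least `2` sends `0` to `0` only, and preserves linear independence of pairs of
vectors in both directions. -/
theorem stmt10 {E : Type*} [NormedAddCommGroup E] [InnerProductSpace ℝ E] [CompleteSpace E]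
    (hdim : 2 ≤ Module.rank ℝ E)
    (φ : E → E)
    (hφ : ∀ a b : E, parArea (φ a) (φ b) = parArea a b) :
    (∀ v : E, φ v = 0 ↔ v = 0) ∧
    (∀ a b : E, LinearIndependent ℝ ![φ a, φ b] ↔ LinearIndependent ℝ ![a, b]) :=
  stmt10_general hdim φ hφ
end
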